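/- arXiv:quant-ph/0302138 — 6 statements merged into one kernel-verified Lean document; each statement's English description precedes it below -/
import Mathlib

section
/- Let δ : ℝ → ℝ be integrable on [0,T] with T ≥ 0, and let H, H' : ℝ → (ℋ →L[ℂ] ℋ) be continuous families of operators such that H(t) and H'(t) are self-adjoint for every t ∈ [0,T] and ‖H(t) − H'(t)‖ ≤ δ(t) for all t ∈ [0,T]. Let U, U' : ℝ → (ℋ →L[ℂ] ℋ) satisfy U(0) = U'(0) = I and the Schrödinger equations: for every t ∈ [0,T], U has derivative −i·H(t)∘U(t) at t and U' has derivative −i·H'(t)∘U'(t) at t. Then ‖U(T) − U'(T)‖ ≤ √(2·∫₀^T δ(t) dt). -/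
/-!
Fix a vector `x` and follow the trajectories `u = U · x` and `v = U' · x`. A self-adjoint generator
makes `‖u‖` and `‖v‖` constant, and `d/dt ‖u - v‖² = 2 Im ⟪u, (H - H') v⟫ ≤ 2 δ ‖x‖²`. Integrating,
`‖(U T - U' T) x‖² ≤ 2 ‖x‖² ∫₀ᵀ δ`; the square root appears because this bounds the square of the
distance.
-/

open Complex Set MeasureTheory
open scoped InnerProductSpace

section

variable {E : Type*} [NormedAddCommGroup E] [InnerProductSpace ℂ E]

theorem HasDerivAt.norm_sq_of_complex {u : ℝ → E} {u' : E} {t : ℝ} (hu : HasDerivAt u u' t) :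
    HasDerivAt (‖u ·‖ ^ 2) (2 * re ⟪u t, u'⟫_ℂ) t := by
  let := InnerProductSpace.rclikeToReal ℂ E
  simpa only [real_inner_eq_re_inner ℂ, RCLike.re_to_complex] using hu.norm_sq

theorem HasDerivAt.continuousLinearMap_apply {V : ℝ → E →L[ℂ] E} {V' : E →L[ℂ] E} {t : ℝ}
    (hV : HasDerivAt V V' t) (x : E) : HasDerivAt (V · x) (V' x) t :=
  ((ContinuousLinearMap.apply ℂ E x).restrictScalars ℝ).hasFDerivAt.comp_hasDerivAt t hV

variable [CompleteSpace E]

namespace IsSelfAdjoint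

variable {A B : E →L[ℂ] E}

theorem re_inner_neg_I_smul_apply_self (hA : IsSelfAdjoint A) (x : E) :
    re ⟪x, -I • A x⟫_ℂ = 0 := by
  have h : im ⟪x, A x⟫_ℂ = 0 := hA.isSymmetric.im_inner_self_apply x
  simp [inner_smul_right, h]

theorem re_inner_sub_neg_I_smul_sub (hA : IsSelfAdjoint A) (hB : IsSelfAdjoint B) (x y : E) :
    re ⟪x - y, -I • (A x - B y)⟫_ℂ = im ⟪x, (A - B) y⟫_ℂ := by
  have hAx : im ⟪x, A x⟫_ℂ = 0 := hA.isSymmetric.im_inner_self_apply x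
  have hBy : im ⟪y, B y⟫_ℂ = 0 := hB.isSymmetric.im_inner_self_apply y
  have hAyx : ⟪y, A x⟫_ℂ = ⟪A y, x⟫_ℂ := (hA.isSymmetric y x).symm
  simp only [neg_smul, inner_neg_right, inner_smul_right, inner_sub_right, inner_sub_left, hAyx,
    neg_re, mul_re, I_re, sub_re, zero_mul, I_im, sub_im, hAx, zero_sub, hBy, sub_zero, one_mul,
    neg_sub, sub_neg_eq_add, neg_add_rev, sub_apply]
  rw [← inner_conj_symm, conj_im]
  ring

end IsSelfAdjoint

section Schrodinger

variable {a b : ℝ} {A B : ℝ → E →L[ℂ] E} {u v : ℝ → E}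

theorem norm_eq_of_hasDerivAt_neg_I_smul (hA : ∀ t ∈ Icc a b, IsSelfAdjoint (A t))
    (hu : ∀ t ∈ Icc a b, HasDerivAt u (-I • A t (u t)) t) :
    ∀ t ∈ Icc a b, ‖u t‖ = ‖u a‖ := by
  have hderiv : ∀ t ∈ Icc a b, HasDerivAt (‖u ·‖ ^ 2) 0 t := fun t ht => by
    simpa only [(hA t ht).re_inner_neg_I_smul_apply_self, mul_zero] using
      (hu t ht).norm_sq_of_complex
  have hconst := constant_of_has_deriv_right_zero
    (fun t ht => (hderiv t ht).continuousAt.continuousWithinAt)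
    (fun t ht => (hderiv t (Ico_subset_Icc_self ht)).hasDerivWithinAt)
  exact fun t ht => (pow_left_inj₀ (norm_nonneg _) (norm_nonneg _) two_ne_zero).1 (hconst t ht)

theorem norm_sub_sq_le_of_hasDerivAt_neg_I_smul {δ : ℝ → ℝ} (hab : a ≤ b)
    (hδ : IntegrableOn δ (Icc a b)) (hA : ∀ t ∈ Icc a b, IsSelfAdjoint (A t))
    (hB : ∀ t ∈ Icc a b, IsSelfAdjoint (B t)) (hAB : ∀ t ∈ Icc a b, ‖A t - B t‖ ≤ δ t)
    (hu : ∀ t ∈ Icc a b, HasDerivAt u (-I • A t (u t)) t)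
    (hv : ∀ t ∈ Icc a b, HasDerivAt v (-I • B t (v t)) t) :
    ‖u b - v b‖ ^ 2 - ‖u a - v a‖ ^ 2 ≤ 2 * ‖u a‖ * ‖v a‖ * ∫ t in a..b, δ t := by
  have hderiv : ∀ t ∈ Icc a b, HasDerivAt (fun s => ‖u s - v s‖ ^ 2)
      (2 * im ⟪u t, (A t - B t) (v t)⟫_ℂ) t := fun t ht => by
    have := ((hu t ht).sub (hv t ht)).norm_sq_of_complex
    rwa [← smul_sub, Pi.sub_apply, (hA t ht).re_inner_sub_neg_I_smul_sub (hB t ht)] at this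
  have hbound : ∀ t ∈ Icc a b, 2 * im ⟪u t, (A t - B t) (v t)⟫_ℂ ≤ 2 * ‖u a‖ * ‖v a‖ * δ t :=
    fun t ht => calc
      2 * im ⟪u t, (A t - B t) (v t)⟫_ℂ ≤ 2 * (‖u t‖ * (‖A t - B t‖ * ‖v t‖)) := by
        gcongr
        exact (im_le_norm _).trans ((norm_inner_le_norm _ _).trans
          (by gcongr; exact (A t - B t).le_opNorm _))
      _ = 2 * ‖u a‖ * ‖v a‖ * ‖A t - B t‖ := by
        rw [norm_eq_of_hasDerivAt_neg_I_smul hA hu t ht,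
          norm_eq_of_hasDerivAt_neg_I_smul hB hv t ht]
        ring
      _ ≤ 2 * ‖u a‖ * ‖v a‖ * δ t := by gcongr; exact hAB t ht
  rw [← intervalIntegral.integral_const_mul]
  exact intervalIntegral.sub_le_integral_of_hasDeriv_right_of_le hab
    (fun t ht => (hderiv t ht).continuousAt.continuousWithinAt)
    (fun t ht => (hderiv t (Ioo_subset_Icc_self ht)).hasDerivWithinAt) (hδ.const_mul _)
    (fun t ht => hbound t (Ioo_subset_Icc_self ht))

end Schrodinger

end

theorem norm_evolution_sub_evolution_le_sqrt_two_mul_integral_general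
    {H : Type*} [NormedAddCommGroup H] [InnerProductSpace ℂ H]
    [FiniteDimensional ℂ H]
    {T : ℝ} (hT : 0 ≤ T)
    (δ : ℝ → ℝ) (hδ : MeasureTheory.IntegrableOn δ (Set.Icc 0 T))
    (Ham Ham' : ℝ → (H →L[ℂ] H))
    (hHsa : ∀ t ∈ Set.Icc (0:ℝ) T, IsSelfAdjoint (Ham t))
    (hH'sa : ∀ t ∈ Set.Icc (0:ℝ) T, IsSelfAdjoint (Ham' t))
    (hδbound : ∀ t ∈ Set.Icc (0:ℝ) T, ‖Ham t - Ham' t‖ ≤ δ t)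
    (U U' : ℝ → (H →L[ℂ] H))
    (hU0 : U 0 = 1) (hU'0 : U' 0 = 1)
    (hU : ∀ t ∈ Set.Icc (0:ℝ) T,
      HasDerivAt U ((-Complex.I) • ((Ham t).comp (U t))) t)
    (hU' : ∀ t ∈ Set.Icc (0:ℝ) T,
      HasDerivAt U' ((-Complex.I) • ((Ham' t).comp (U' t))) t) :
    ‖U T - U' T‖ ≤ Real.sqrt (2 * ∫ t in (0:ℝ)..T, δ t) := by
  refine ContinuousLinearMap.opNorm_le_bound _ (Real.sqrt_nonneg _) fun x => ?_
  have hsq := norm_sub_sq_le_of_hasDerivAt_neg_I_smul hT hδ hHsa hH'sa hδbound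
    (fun t ht => (hU t ht).continuousLinearMap_apply x)
    (fun t ht => (hU' t ht).continuousLinearMap_apply x)
  simp only [hU0, hU'0, one_apply_eq_self, sub_self, norm_zero, zero_pow two_ne_zero, sub_zero]
    at hsq
  rw [← Real.sqrt_sq (norm_nonneg x), ← Real.sqrt_mul' _ (sq_nonneg _)]
  exact Real.le_sqrt_of_sq_le (hsq.trans_eq (by ring))

/-- **Lemma 1** (generalized from van Dam–Mosca–Vazirani): if two time-dependent
self-adjoint Hamiltonians `Ham`, `Ham'` differ in operator norm by at most `δ t`
at each time `t ∈ [0,T]`, then the unitary evolutions they induce (with the same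
initial condition `U 0 = U' 0 = 1`) satisfy
`‖U T − U' T‖ ≤ √(2 ∫₀ᵀ δ)`. -/
theorem norm_evolution_sub_evolution_le_sqrt_two_mul_integral
    {H : Type*} [NormedAddCommGroup H] [InnerProductSpace ℂ H]
    [FiniteDimensional ℂ H] [Nontrivial H]
    {T : ℝ} (hT : 0 ≤ T)
    (δ : ℝ → ℝ) (hδ : MeasureTheory.IntegrableOn δ (Set.Icc 0 T))
    (Ham Ham' : ℝ → (H →L[ℂ] H))
    (hHcont : ContinuousOn Ham (Set.Icc 0 T))
    (hH'cont : ContinuousOn Ham' (Set.Icc 0 T))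
    (hHsa : ∀ t ∈ Set.Icc (0:ℝ) T, IsSelfAdjoint (Ham t))
    (hH'sa : ∀ t ∈ Set.Icc (0:ℝ) T, IsSelfAdjoint (Ham' t))
    (hδbound : ∀ t ∈ Set.Icc (0:ℝ) T, ‖Ham t - Ham' t‖ ≤ δ t)
    (U U' : ℝ → (H →L[ℂ] H))
    (hU0 : U 0 = 1) (hU'0 : U' 0 = 1)
    (hU : ∀ t ∈ Set.Icc (0:ℝ) T,
      HasDerivAt U ((-Complex.I) • ((Ham t).comp (U t))) t)
    (hU' : ∀ t ∈ Set.Icc (0:ℝ) T,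
      HasDerivAt U' ((-Complex.I) • ((Ham' t).comp (U' t))) t) :
    ‖U T - U' T‖ ≤ Real.sqrt (2 * ∫ t in (0:ℝ)..T, δ t) :=
  norm_evolution_sub_evolution_le_sqrt_two_mul_integral_general hT δ hδ Ham Ham' hHsa hH'sa hδbound
    U U' hU0 hU'0 hU hU'
end

section
/- For every t ∈ ℝ and every x ∈ Fin N, O_f ∘ (I ⊗ U_t) ∘ O_f applied to |x⟩ ⊗ |0⟩ equals (exp(−i·t·H_f)|x⟩) ⊗ |0⟩. That is, the circuit consisting of one oracle call, the phase gate U_t on the ancilla, and a second oracle call simulates the Hamiltonian evolution exp(−i·t·H_f) on the first register with the ancilla returned to |0⟩. -/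
open scoped TensorProduct

/-- The rank-one projector `|ψ⟩⟨ψ|`, mapping `v` to `⟪ψ, v⟫ • ψ`. -/
noncomputable def proj {H : Type*} [NormedAddCommGroup H] [InnerProductSpace ℂ H]
    (ψ : H) : H →L[ℂ] H := (innerSL ℂ ψ).smulRight ψ

/-!
Both sides are multiples of `|x⟩ ⊗ |0⟩`. The Hamiltonian `I − |m⟩⟨m|` has eigenvector `|x⟩` with
eigenvalue `1 − f x`, so `exp(−itH_f)|x⟩ = e^{−it(1 − f x)}|x⟩`. The first oracle call moves the
ancilla to `|f x⟩`, the phase gate multiplies by `e^{−it}` exactly when `f x = 0`, and the second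
call returns the ancilla to `|0⟩` because `f x + f x = 0` in `Fin 2`.
-/

open EuclideanSpace (single)

theorem NormedSpace.exp_apply_of_apply_eq_smul {𝕂 E : Type*} [RCLike 𝕂] [NormedAddCommGroup E]
    [NormedSpace 𝕂 E] [CompleteSpace E] {A : E →L[𝕂] E} {v : E} {μ : 𝕂} (h : A v = μ • v) :
    exp A v = exp μ • v := by
  have hpow : ∀ n : ℕ, (A ^ n) v = μ ^ n • v := fun n => by
    induction n with
    | zero => simp
    | succ n ih => rw [pow_succ', mul_apply_eq_comp, ih, map_smul, h, smul_smul, pow_succ]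
  have hA := (exp_series_hasSum_exp' (𝕂 := 𝕂) A).mapL (ContinuousLinearMap.apply 𝕂 E v)
  simp only [ContinuousLinearMap.apply_apply, smul_apply, hpow, ← smul_assoc] at hA
  exact hA.unique ((exp_series_hasSum_exp' μ).smul_const v)

theorem proj_single_apply_single {ι : Type*} [Fintype ι] [DecidableEq ι] (i j : ι) :
    proj (single i (1 : ℂ)) (single j 1) = if j = i then single i 1 else 0 := by
  simp only [proj, ContinuousLinearMap.smulRight_apply, innerSL_apply_apply,
    EuclideanSpace.inner_single_left, PiLp.single_apply, map_one, one_mul]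
  split_ifs <;> simp_all

theorem one_sub_proj_single_apply_single {ι : Type*} [Fintype ι] [DecidableEq ι] (m x : ι) :
    (1 - proj (single m (1 : ℂ))) (single x 1) = (if x = m then 0 else 1 : ℂ) • single x 1 := by
  rw [sub_apply, proj_single_apply_single]
  split_ifs with h <;> simp [h]

theorem phaseGate_apply_single (z : ℂ) (y : Fin 2) :
    (z • (proj (single (0 : Fin 2) (1 : ℂ))).toLinearMap +
        (proj (single (1 : Fin 2) (1 : ℂ))).toLinearMap) (single y 1) =
      (if y = 0 then z else 1) • single y 1 := by
  fin_cases y <;> simp [proj_single_apply_single]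

theorem oracle_lTensor_diagonal_oracle_apply {ι : Type*} [DecidableEq ι]
    (f : ι → Fin 2) (Of : EuclideanSpace ℂ ι ⊗[ℂ] EuclideanSpace ℂ (Fin 2) →ₗ[ℂ]
      EuclideanSpace ℂ ι ⊗[ℂ] EuclideanSpace ℂ (Fin 2))
    (hOf : ∀ x y, Of (single x (1 : ℂ) ⊗ₜ[ℂ] single y (1 : ℂ)) = single x 1 ⊗ₜ single (y + f x) 1)
    (U : EuclideanSpace ℂ (Fin 2) →ₗ[ℂ] EuclideanSpace ℂ (Fin 2)) (phase : Fin 2 → ℂ)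
    (hU : ∀ y, U (single y 1) = phase y • single y 1) (x : ι) :
    (Of ∘ₗ U.lTensor _ ∘ₗ Of) (single x (1 : ℂ) ⊗ₜ[ℂ] single (0 : Fin 2) (1 : ℂ)) =
      phase (f x) • single x 1 ⊗ₜ single 0 1 := by
  have hff : ∀ a : Fin 2, a + a = 0 := by decide
  simp only [LinearMap.comp_apply, hOf, zero_add, LinearMap.lTensor_tmul, hU,
    TensorProduct.tmul_smul, map_smul, hff]

theorem oracle_circuit_simulates_oracleHamiltonian_general (N : ℕ) (m : Fin N)
    (f : Fin N → Fin 2) (hf : ∀ x, f x = if x = m then 1 else 0)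
    (Of : EuclideanSpace ℂ (Fin N) ⊗[ℂ] EuclideanSpace ℂ (Fin 2) →ₗ[ℂ]
          EuclideanSpace ℂ (Fin N) ⊗[ℂ] EuclideanSpace ℂ (Fin 2))
    (hOf : ∀ (x : Fin N) (y : Fin 2),
      Of (EuclideanSpace.single x (1 : ℂ) ⊗ₜ[ℂ] EuclideanSpace.single y (1 : ℂ)) =
        EuclideanSpace.single x (1 : ℂ) ⊗ₜ[ℂ] EuclideanSpace.single (y + f x) (1 : ℂ))
    (t : ℝ)
    (Ut : EuclideanSpace ℂ (Fin 2) →ₗ[ℂ] EuclideanSpace ℂ (Fin 2))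
    (hUt : Ut = Complex.exp (-(Complex.I * (t : ℂ))) •
        (proj (EuclideanSpace.single (0 : Fin 2) 1)).toLinearMap +
      (proj (EuclideanSpace.single (1 : Fin 2) 1)).toLinearMap)
    (x : Fin N) :
    (Of ∘ₗ (LinearMap.lTensor (EuclideanSpace ℂ (Fin N)) Ut) ∘ₗ Of)
      (EuclideanSpace.single x (1 : ℂ) ⊗ₜ[ℂ] EuclideanSpace.single (0 : Fin 2) (1 : ℂ)) =
    ((NormedSpace.exp
      ((-(Complex.I * (t : ℂ))) •
        ((1 : EuclideanSpace ℂ (Fin N) →L[ℂ] EuclideanSpace ℂ (Fin N)) -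
          proj (EuclideanSpace.single m 1))) :
      EuclideanSpace ℂ (Fin N) →L[ℂ] EuclideanSpace ℂ (Fin N))
      (EuclideanSpace.single x (1 : ℂ)))
    ⊗ₜ[ℂ] EuclideanSpace.single (0 : Fin 2) (1 : ℂ) := by
  set c : ℂ := -(Complex.I * (t : ℂ))
  have hH : (c • (1 - proj (single m (1 : ℂ)))) (single x 1) =
      (c * if x = m then 0 else 1) • single x 1 := by
    rw [smul_apply, one_sub_proj_single_apply_single, smul_smul]
  subst hUt
  rw [oracle_lTensor_diagonal_oracle_apply f Of hOf _ _ (phaseGate_apply_single _) x,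
    NormedSpace.exp_apply_of_apply_eq_smul hH, ← TensorProduct.smul_tmul', ← Complex.exp_eq_exp_ℂ,
    hf]
  split_ifs <;> simp_all

/-- The circuit "oracle, then phase gate `U_t = e^{−it}|0⟩⟨0| + |1⟩⟨1|` on the
ancilla, then oracle again", applied to `|x⟩ ⊗ |0⟩`, simulates the Hamiltonian
evolution `exp(−itH_f)` on the first register and returns the ancilla to `|0⟩`:
`O_f (I ⊗ U_t) O_f (|x⟩ ⊗ |0⟩) = (exp(−itH_f)|x⟩) ⊗ |0⟩`, where
`H_f = I − |m⟩⟨m|`, `f` is the indicator of `m`, and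
`O_f(|x⟩ ⊗ |y⟩) = |x⟩ ⊗ |y ⊕ f(x)⟩`. -/
theorem oracle_circuit_simulates_oracleHamiltonian (N : ℕ) (hN : 2 ≤ N) (m : Fin N)
    (f : Fin N → Fin 2) (hf : ∀ x, f x = if x = m then 1 else 0)
    (Of : EuclideanSpace ℂ (Fin N) ⊗[ℂ] EuclideanSpace ℂ (Fin 2) →ₗ[ℂ]
          EuclideanSpace ℂ (Fin N) ⊗[ℂ] EuclideanSpace ℂ (Fin 2))
    (hOf : ∀ (x : Fin N) (y : Fin 2),
      Of (EuclideanSpace.single x (1 : ℂ) ⊗ₜ[ℂ] EuclideanSpace.single y (1 : ℂ)) =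
        EuclideanSpace.single x (1 : ℂ) ⊗ₜ[ℂ] EuclideanSpace.single (y + f x) (1 : ℂ))
    (t : ℝ)
    (Ut : EuclideanSpace ℂ (Fin 2) →ₗ[ℂ] EuclideanSpace ℂ (Fin 2))
    (hUt : Ut = Complex.exp (-(Complex.I * (t : ℂ))) •
        (proj (EuclideanSpace.single (0 : Fin 2) 1)).toLinearMap +
      (proj (EuclideanSpace.single (1 : Fin 2) 1)).toLinearMap)
    (x : Fin N) :
    (Of ∘ₗ (LinearMap.lTensor (EuclideanSpace ℂ (Fin N)) Ut) ∘ₗ Of)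
      (EuclideanSpace.single x (1 : ℂ) ⊗ₜ[ℂ] EuclideanSpace.single (0 : Fin 2) (1 : ℂ)) =
    ((NormedSpace.exp
      ((-(Complex.I * (t : ℂ))) •
        ((1 : EuclideanSpace ℂ (Fin N) →L[ℂ] EuclideanSpace ℂ (Fin N)) -
          proj (EuclideanSpace.single m 1))) :
      EuclideanSpace ℂ (Fin N) →L[ℂ] EuclideanSpace ℂ (Fin N))
      (EuclideanSpace.single x (1 : ℂ)))
    ⊗ₜ[ℂ] EuclideanSpace.single (0 : Fin 2) (1 : ℂ) :=
  oracle_circuit_simulates_oracleHamiltonian_general N m f hf Of hOf t Ut hUt x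
end

section
/- At time T = (π/2)·√N, the analog quantum search reaches the marked state up to a global phase: exp(−i·(H_0 + H_f)·T)|s⟩ = i·e^{−iT}·|m⟩. -/
open scoped Real

/-- The uniform superposition `|s⟩ = (1/√N) ∑_x |x⟩`. -/
noncomputable def uniformState (N : ℕ) : EuclideanSpace ℂ (Fin N) :=
  ((1 / Real.sqrt N : ℝ) : ℂ) • ∑ x : Fin N, EuclideanSpace.single x (1 : ℂ)

/-! The Hamiltonian `(1 - |ψ⟩⟨ψ|) + (1 - |φ⟩⟨φ|)` for unit vectors with real overlap `c` has
eigenvectors `ψ + φ` and `ψ - φ` with eigenvalues `1 - c` and `1 + c`. Writing `ψ` as their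
average gives `exp(-itH) ψ = e^{-it} (cos(tc) ψ + i sin(tc) φ)`. For `ψ = |s⟩`, `φ = |m⟩` the
overlap is `1/√N`, so at `t = (π/2)√N` all amplitude sits on `|m⟩`. -/

open Complex

section Exp

variable {𝕂 E : Type*} [RCLike 𝕂] [NormedAddCommGroup E] [NormedSpace 𝕂 E] [CompleteSpace E]

theorem NormedSpace.exp_apply_of_apply_eq_smul_s6 {B : E →L[𝕂] E} {v : E} {μ : 𝕂}
    (h : B v = μ • v) : NormedSpace.exp B v = NormedSpace.exp μ • v := by
  have hpow (n : ℕ) : (B ^ n) v = μ ^ n • v := by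
    induction n with
    | zero => simp
    | succ k ih => rw [pow_succ', mul_apply_eq_comp, ih, map_smul, h, smul_smul, pow_succ]
  have hB := (NormedSpace.exp_series_hasSum_exp' (𝕂 := 𝕂) B).mapL
    (ContinuousLinearMap.apply 𝕂 E v)
  have hμ := (NormedSpace.exp_series_hasSum_exp' (𝕂 := 𝕂) μ).smul_const v
  simp only [ContinuousLinearMap.apply_apply, smul_apply, hpow,
    smul_smul, smul_eq_mul] at hB hμ
  exact hB.unique hμ

end Exp

section Search

variable {H : Type*} [NormedAddCommGroup H] [InnerProductSpace ℂ H]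

theorem proj_apply (ψ v : H) : proj ψ v = inner ℂ ψ v • ψ := rfl

noncomputable def searchHamiltonian (ψ φ : H) : H →L[ℂ] H := (1 - proj ψ) + (1 - proj φ)

variable {ψ φ : H} {c : ℝ}

theorem searchHamiltonian_apply_add (hψ : ‖ψ‖ = 1) (hφ : ‖φ‖ = 1) (hc : inner ℂ ψ φ = c) :
    searchHamiltonian ψ φ (ψ + φ) = (1 - c : ℂ) • (ψ + φ) := by
  have hc' : inner ℂ φ ψ = c := by rw [← inner_conj_symm, hc, conj_ofReal]
  simp only [searchHamiltonian, add_apply, sub_apply,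
    one_apply_eq_self, proj_apply, inner_add_right, inner_self_eq_one_of_norm_eq_one hψ,
    inner_self_eq_one_of_norm_eq_one hφ, hc, hc']
  module

theorem searchHamiltonian_apply_sub (hψ : ‖ψ‖ = 1) (hφ : ‖φ‖ = 1) (hc : inner ℂ ψ φ = c) :
    searchHamiltonian ψ φ (ψ - φ) = (1 + c : ℂ) • (ψ - φ) := by
  have hc' : inner ℂ φ ψ = c := by rw [← inner_conj_symm, hc, conj_ofReal]
  simp only [searchHamiltonian, add_apply, sub_apply,
    one_apply_eq_self, proj_apply, inner_sub_right, inner_self_eq_one_of_norm_eq_one hψ,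
    inner_self_eq_one_of_norm_eq_one hφ, hc, hc']
  module

theorem exp_searchHamiltonian_apply [CompleteSpace H] (hψ : ‖ψ‖ = 1) (hφ : ‖φ‖ = 1)
    (hc : inner ℂ ψ φ = c) (t : ℂ) :
    NormedSpace.exp (-(I * t) • searchHamiltonian ψ φ) ψ =
      exp (-(I * t)) • (cos (t * c) • ψ + (I * sin (t * c)) • φ) := by
  have evolve (v : H) (μ : ℂ) (hv : searchHamiltonian ψ φ v = μ • v) :
      NormedSpace.exp (-(I * t) • searchHamiltonian ψ φ) v = exp (-(I * t) * μ) • v := by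
    rw [exp_eq_exp_ℂ]
    refine NormedSpace.exp_apply_of_apply_eq_smul_s6 ?_
    rw [smul_apply, hv, smul_smul]
  have hplus : exp (-(I * t) * (1 - c)) = exp (-(I * t)) * (cos (t * c) + sin (t * c) * I) := by
    rw [cos_add_sin_I, ← exp_add]; ring_nf
  have hminus : exp (-(I * t) * (1 + c)) = exp (-(I * t)) * (cos (t * c) - sin (t * c) * I) := by
    rw [cos_sub_sin_I, ← exp_add]; ring_nf
  calc NormedSpace.exp (-(I * t) • searchHamiltonian ψ φ) ψ
      = NormedSpace.exp (-(I * t) • searchHamiltonian ψ φ)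
          ((1 / 2 : ℂ) • (ψ + φ) + (1 / 2 : ℂ) • (ψ - φ)) := by congr 1; module
    _ = exp (-(I * t)) • (cos (t * c) • ψ + (I * sin (t * c)) • φ) := by
      rw [map_add, map_smul, map_smul, evolve _ _ (searchHamiltonian_apply_add hψ hφ hc),
        evolve _ _ (searchHamiltonian_apply_sub hψ hφ hc), hplus, hminus]
      module

end Search

theorem uniformState_apply {N : ℕ} (x : Fin N) :
    uniformState N x = ((1 / Real.sqrt N : ℝ) : ℂ) := by
  simp [uniformState, Finset.sum_apply]

theorem norm_uniformState {N : ℕ} (hN : N ≠ 0) : ‖uniformState N‖ = 1 := by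
  simp [EuclideanSpace.norm_eq, uniformState_apply, hN]

theorem inner_uniformState_single {N : ℕ} (x : Fin N) :
    inner ℂ (uniformState N) (EuclideanSpace.single x 1) = ((1 / Real.sqrt N : ℝ) : ℂ) := by
  simp [EuclideanSpace.inner_single_right, uniformState_apply]

theorem exp_analogSearch_at_final_time_general (N : ℕ) (m : Fin N)
    (T : ℝ) (hT : T = (π / 2) * Real.sqrt N) :
    (NormedSpace.exp
      ((-(Complex.I * (T : ℂ))) •
        (((1 : EuclideanSpace ℂ (Fin N) →L[ℂ] EuclideanSpace ℂ (Fin N)) -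
            proj (uniformState N)) +
          ((1 : EuclideanSpace ℂ (Fin N) →L[ℂ] EuclideanSpace ℂ (Fin N)) -
            proj (EuclideanSpace.single m 1)))) :
      EuclideanSpace ℂ (Fin N) →L[ℂ] EuclideanSpace ℂ (Fin N))
      (uniformState N) =
    (Complex.I * Complex.exp (-(Complex.I * (T : ℂ)))) •
      EuclideanSpace.single m (1 : ℂ) := by
  have hN : N ≠ 0 := m.pos.ne'
  have hTc : T * (1 / Real.sqrt N) = π / 2 := by
    have : Real.sqrt N ≠ 0 := by positivity
    rw [hT]
    field_simp
  have hevol := exp_searchHamiltonian_apply (norm_uniformState hN) (by simp)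
    (inner_uniformState_single m) T
  rw [← ofReal_mul, hTc, ofReal_div, ofReal_ofNat, cos_pi_div_two, sin_pi_div_two] at hevol
  rw [← searchHamiltonian, hevol]
  module

/-- At time `T = (π/2)√N`, the analog quantum search (evolution under
`H⁰ + H_f` with `H⁰ = I − |s⟩⟨s|`, `H_f = I − |m⟩⟨m|`, starting from `|s⟩`)
reaches the marked state up to a global phase:
`exp(−i(H⁰+H_f)T)|s⟩ = i e^{−iT} |m⟩`. -/
theorem exp_analogSearch_at_final_time (N : ℕ) (hN : 2 ≤ N) (m : Fin N)
    (T : ℝ) (hT : T = (π / 2) * Real.sqrt N) :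
    (NormedSpace.exp
      ((-(Complex.I * (T : ℂ))) •
        (((1 : EuclideanSpace ℂ (Fin N) →L[ℂ] EuclideanSpace ℂ (Fin N)) -
            proj (uniformState N)) +
          ((1 : EuclideanSpace ℂ (Fin N) →L[ℂ] EuclideanSpace ℂ (Fin N)) -
            proj (EuclideanSpace.single m 1)))) :
      EuclideanSpace ℂ (Fin N) →L[ℂ] EuclideanSpace ℂ (Fin N))
      (uniformState N) =
    (Complex.I * Complex.exp (-(Complex.I * (T : ℂ)))) •
      EuclideanSpace.single m (1 : ℂ) :=
  exp_analogSearch_at_final_time_general N m T hT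
end

section
/- Fix ε > 0 and define t : [0,1] → ℝ by t(s) = (N / (2ε√(N−1)))·[arctan(√(N−1)·(2s−1)) + arctan(√(N−1))]. Then t(0) = 0, t is strictly increasing, and for every s ∈ [0,1], t has derivative 1/(ε·g(s)²) at s, where g(s) = √(1 − 4((N−1)/N)·s·(1−s)). (This is the local adiabatic schedule: the evolution rate ds/dt = ε·g(s)² at every instant.) -/
/-!
Writing `4s(1-s) = 1 - (2s-1)²`, the squared gap is `g(s)² = (1 + (N-1)(2s-1)²)/N`, which is
positive for every real `s`. With `a = √(N-1)`, the chain rule gives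
`t'(s) = (N/(2εa)) · 2a/(1 + a²(2s-1)²) = N/(ε(1 + (N-1)(2s-1)²)) = 1/(ε g(s)²) > 0`,
so `t` is strictly increasing, and `t(0) = 0` because `arctan` is odd.
-/

open Real

lemma one_sub_four_mul_div_mul_one_sub {n : ℝ} (hn : n ≠ 0) (s : ℝ) :
    1 - 4 * ((n - 1) / n) * s * (1 - s) = (1 + (n - 1) * (2 * s - 1) ^ 2) / n := by
  field_simp
  ring

lemma sq_sqrt_one_sub_four_mul_div_mul_one_sub {n : ℝ} (hn : 1 ≤ n) (s : ℝ) :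
    √(1 - 4 * ((n - 1) / n) * s * (1 - s)) ^ 2 = (1 + (n - 1) * (2 * s - 1) ^ 2) / n := by
  rw [one_sub_four_mul_div_mul_one_sub (by positivity) s, sq_sqrt]
  have : 0 ≤ n - 1 := by linarith
  positivity

lemma hasDerivAt_const_mul_arctan_add (a c d s : ℝ) :
    HasDerivAt (fun s => c * (arctan (a * (2 * s - 1)) + d))
      (2 * a * c / (1 + a ^ 2 * (2 * s - 1) ^ 2)) s := by
  have hlin : HasDerivAt (fun s => a * (2 * s - 1)) (a * 2) s := by
    simpa using (((hasDerivAt_id s).const_mul 2).sub_const 1).const_mul a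
  refine ((hlin.arctan.add_const d).const_mul c).congr_deriv ?_
  rw [mul_pow]
  field_simp

/-- The local adiabatic schedule
`t(s) = (N/(2ε√(N−1)))[arctan(√(N−1)(2s−1)) + arctan(√(N−1))]`
satisfies `t(0) = 0`, is strictly increasing on `[0,1]`, and has derivative
`t'(s) = 1/(ε·g(s)²)` at every `s ∈ [0,1]`, where
`g(s) = √(1 − 4((N−1)/N)s(1−s))` is the spectral gap;
i.e. the evolution rate is `ds/dt = ε·g(s)²` at every instant. -/
theorem localAdiabaticSchedule_deriv (N : ℕ) (hN : 2 ≤ N) (ε : ℝ) (hε : 0 < ε)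
    (g : ℝ → ℝ)
    (hg : ∀ s, g s = Real.sqrt (1 - 4 * ((N - 1 : ℝ) / N) * s * (1 - s)))
    (t : ℝ → ℝ)
    (ht : ∀ s, t s = (N / (2 * ε * Real.sqrt (N - 1))) *
      (Real.arctan (Real.sqrt (N - 1) * (2 * s - 1)) + Real.arctan (Real.sqrt (N - 1)))) :
    t 0 = 0 ∧ StrictMonoOn t (Set.Icc (0:ℝ) 1) ∧
      ∀ s ∈ Set.Icc (0:ℝ) 1, HasDerivAt t (1 / (ε * (g s)^2)) s := by
  have hN1 : (1 : ℝ) < N := by exact_mod_cast hN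
  have ha : 0 < √((N : ℝ) - 1) := sqrt_pos.mpr (by linarith)
  have hg2 (s : ℝ) : g s ^ 2 = (1 + ((N : ℝ) - 1) * (2 * s - 1) ^ 2) / N := by
    rw [hg, sq_sqrt_one_sub_four_mul_div_mul_one_sub hN1.le]
  have hderiv (s : ℝ) : HasDerivAt t (1 / (ε * g s ^ 2)) s := by
    rw [funext ht]
    convert hasDerivAt_const_mul_arctan_add _ _ _ s using 1
    rw [hg2, sq_sqrt (by linarith)]
    field_simp
  have hpos (s : ℝ) : 0 < 1 / (ε * g s ^ 2) := by
    rw [hg2]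
    have : 0 ≤ (N : ℝ) - 1 := by linarith
    positivity
  refine ⟨?_, (strictMono_of_hasDerivAt_pos hderiv hpos).strictMonoOn _,
    fun s _ => hderiv s⟩
  rw [ht, mul_zero, zero_sub, mul_neg_one, arctan_neg, neg_add_cancel, mul_zero]
end

section
/- Fix ε > 0 and define t : [0,1] → ℝ by t(s) = (N / (2ε√(N−1)))·[arctan(√(N−1)·(2s−1)) + arctan(√(N−1))]. Then the total running time of the local adiabatic search satisfies T = t(1) = (N / (ε√(N−1)))·arctan(√(N−1)), and T ≤ (π/ε)·√N. -/
/-! Since `arctan < π / 2`, the bound reduces to `N ≤ 2 √N √(N - 1)`, which after squaring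
is `N ≤ 4 (N - 1)`, i.e. `4 / 3 ≤ N`. -/

open Real

lemma self_le_two_mul_sqrt_mul_sqrt_sub_one {x : ℝ} (hx : 4 / 3 ≤ x) :
    x ≤ 2 * √x * √(x - 1) := by
  have hsq : x ^ 2 ≤ 4 * x * (x - 1) := by nlinarith
  calc x = √(x ^ 2) := (sqrt_sq (by linarith)).symm
    _ ≤ √(4 * x * (x - 1)) := sqrt_le_sqrt hsq
    _ = 2 * √x * √(x - 1) := by
      rw [sqrt_mul (by positivity), sqrt_mul (by norm_num), show (4 : ℝ) = 2 ^ 2 by norm_num,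
        sqrt_sq (by norm_num)]

lemma div_mul_arctan_sqrt_sub_one_le {x ε : ℝ} (hx : 4 / 3 ≤ x) (hε : 0 < ε) :
    x / (ε * √(x - 1)) * arctan √(x - 1) ≤ π / ε * √x := by
  have hs : 0 < √(x - 1) := sqrt_pos.mpr (by linarith)
  calc x / (ε * √(x - 1)) * arctan √(x - 1)
      ≤ x / (ε * √(x - 1)) * (π / 2) := by
        gcongr
        exact (arctan_lt_pi_div_two _).le
    _ ≤ 2 * √x * √(x - 1) / (ε * √(x - 1)) * (π / 2) := by
        gcongr
        exact self_le_two_mul_sqrt_mul_sqrt_sub_one hx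
    _ = π / ε * √x := by
        field_simp

/-- The total running time of the local adiabatic quantum search, i.e. the
value at `s = 1` of the schedule
`t(s) = (N/(2ε√(N−1)))[arctan(√(N−1)(2s−1)) + arctan(√(N−1))]`,
equals `T = (N/(ε√(N−1)))·arctan(√(N−1))`, and satisfies `T ≤ (π/ε)√N`. -/
theorem localAdiabaticSchedule_total_time (N : ℕ) (hN : 2 ≤ N) (ε : ℝ) (hε : 0 < ε)
    (t : ℝ → ℝ)
    (ht : ∀ s, t s = (N / (2 * ε * Real.sqrt (N - 1))) *
      (Real.arctan (Real.sqrt (N - 1) * (2 * s - 1)) + Real.arctan (Real.sqrt (N - 1)))) :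
    t 1 = (N / (ε * Real.sqrt (N - 1))) * Real.arctan (Real.sqrt (N - 1)) ∧
      t 1 ≤ (π / ε) * Real.sqrt N := by
  have hN' : (4 / 3 : ℝ) ≤ N := by
    have : (2 : ℝ) ≤ N := by exact_mod_cast hN
    linarith
  have ht1 : t 1 = (N / (ε * √(N - 1))) * arctan √(N - 1) := by
    rw [ht 1]
    ring_nf
  exact ⟨ht1, ht1 ▸ div_mul_arctan_sqrt_sub_one_le hN' hε⟩
end

section
/- There exists a constant C > 0, independent of the dimension, such that for every nonzero finite-dimensional complex inner product space ℋ and all self-adjoint operators A, B on ℋ with ‖A‖ ≤ 1 and ‖B‖ ≤ 1, ‖exp(−i(A+B)) − exp(−iA)·exp(−iB)‖ ≤ C·‖A·B − B·A‖. -/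
/-!
The path `s ↦ exp ((1 - s) (Y + Z)) exp (s Y) exp (s Z)` runs from `exp (Y + Z)` to
`exp Y exp Z`, with derivative `exp ((1 - s) (Y + Z)) [exp (s Y), Z] exp (s Z)`.
The same interpolation trick applied to `s ↦ exp (s M) N exp ((1 - s) M)` gives
`‖[exp M, N]‖ ≤ e^‖M‖ ‖[M, N]‖`, so the derivative is bounded by `e^(‖Y‖ + ‖Z‖) ‖[Y, Z]‖`
and the mean value inequality yields the estimate; for `Y = -iA`, `Z = -iB` take `C = e²`.
-/

open NormedSpace
open scoped Nat

section BanachAlgebra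

variable {𝔸 : Type*} [NormedRing 𝔸] [NormedAlgebra ℝ 𝔸]

theorem norm_exp_le_exp_norm [NormOneClass 𝔸] (M : 𝔸) : ‖exp M‖ ≤ Real.exp ‖M‖ := by
  have hsum : HasSum (fun n : ℕ => ‖M‖ ^ n / n !) (Real.exp ‖M‖) := by
    rw [Real.exp_eq_exp_ℝ, exp_eq_tsum_div]
    exact (expSeries_div_summable ‖M‖).hasSum
  rw [exp_eq_tsum ℝ]
  refine tsum_of_norm_bounded hsum fun n => ?_
  rw [norm_smul, Real.norm_eq_abs, abs_of_nonneg (by positivity), inv_mul_eq_div]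
  gcongr
  exact norm_pow_le M n

theorem norm_exp_smul_le [NormOneClass 𝔸] (M : 𝔸) {t : ℝ} (ht : 0 ≤ t) :
    ‖exp (t • M)‖ ≤ Real.exp (t * ‖M‖) := by
  simpa [norm_smul, abs_of_nonneg ht] using norm_exp_le_exp_norm (t • M)

variable [CompleteSpace 𝔸]

theorem hasDerivAt_exp_one_sub_smul (M : 𝔸) (s : ℝ) :
    HasDerivAt (fun u : ℝ => exp ((1 - u) • M)) (-(exp ((1 - s) • M) * M)) s := by
  simpa [Function.comp_def] using
    (hasDerivAt_exp_smul_const M (1 - s)).scomp s ((hasDerivAt_id s).const_sub 1)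

theorem norm_exp_mul_sub_mul_exp_le [NormOneClass 𝔸] (M N : 𝔸) :
    ‖exp M * N - N * exp M‖ ≤ Real.exp ‖M‖ * ‖M * N - N * M‖ := by
  let f : ℝ → 𝔸 := fun s => exp (s • M) * N * exp ((1 - s) • M)
  let f' : ℝ → 𝔸 := fun s => exp (s • M) * (M * N - N * M) * exp ((1 - s) • M)
  have hf : ∀ s, HasDerivAt f (f' s) s := fun s => by
    have hM : exp ((1 - s) • M) * M = M * exp ((1 - s) • M) :=
      ((Commute.refl M).smul_left _).exp_left.eq
    refine (((hasDerivAt_exp_smul_const M s).mul_const N).mul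
      (hasDerivAt_exp_one_sub_smul M s)).congr_deriv ?_
    simp only [f', hM]
    noncomm_ring
  have hbound : ∀ s ∈ Set.Ico (0 : ℝ) 1, ‖f' s‖ ≤ Real.exp ‖M‖ * ‖M * N - N * M‖ := by
    rintro s ⟨hs0, hs1⟩
    calc ‖f' s‖ ≤ ‖exp (s • M)‖ * ‖M * N - N * M‖ * ‖exp ((1 - s) • M)‖ := norm_mul₃_le
      _ ≤ Real.exp (s * ‖M‖) * ‖M * N - N * M‖ * Real.exp ((1 - s) * ‖M‖) := by
        gcongr
        exacts [norm_exp_smul_le M hs0, norm_exp_smul_le M (by linarith)]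
      _ = Real.exp ‖M‖ * ‖M * N - N * M‖ := by
        rw [mul_right_comm, ← Real.exp_add]; ring_nf
  simpa [f] using norm_image_sub_le_of_norm_deriv_le_segment_01'
    (fun s _ => (hf s).hasDerivWithinAt) hbound

theorem norm_exp_add_sub_exp_mul_exp_le [NormOneClass 𝔸] (Y Z : 𝔸) :
    ‖exp (Y + Z) - exp Y * exp Z‖ ≤ Real.exp (‖Y‖ + ‖Z‖) * ‖Y * Z - Z * Y‖ := by
  let f : ℝ → 𝔸 := fun s => exp ((1 - s) • (Y + Z)) * exp (s • Y) * exp (s • Z)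
  let f' : ℝ → 𝔸 := fun s =>
    exp ((1 - s) • (Y + Z)) * (exp (s • Y) * Z - Z * exp (s • Y)) * exp (s • Z)
  have hf : ∀ s, HasDerivAt f (f' s) s := fun s => by
    have hY : exp (s • Y) * Y = Y * exp (s • Y) := ((Commute.refl Y).smul_left s).exp_left.eq
    have hZ : exp (s • Z) * Z = Z * exp (s • Z) := ((Commute.refl Z).smul_left s).exp_left.eq
    refine (((hasDerivAt_exp_one_sub_smul (Y + Z) s).mul (hasDerivAt_exp_smul_const Y s)).mul
      (hasDerivAt_exp_smul_const Z s)).congr_deriv ?_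
    simp only [f', Pi.mul_apply, hY, hZ]
    noncomm_ring
  have hbound : ∀ s ∈ Set.Ico (0 : ℝ) 1,
      ‖f' s‖ ≤ Real.exp (‖Y‖ + ‖Z‖) * ‖Y * Z - Z * Y‖ := by
    rintro s ⟨hs0, hs1⟩
    have hcomm : (s • Y) * Z - Z * (s • Y) = s • (Y * Z - Z * Y) := by
      rw [smul_mul_assoc, mul_smul_comm, smul_sub]
    have hYZ : ‖exp (s • Y) * Z - Z * exp (s • Y)‖ ≤
        Real.exp (s * ‖Y‖) * (s * ‖Y * Z - Z * Y‖) := by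
      have h := norm_exp_mul_sub_mul_exp_le (s • Y) Z
      rwa [hcomm, norm_smul, norm_smul, Real.norm_eq_abs, abs_of_nonneg hs0] at h
    calc ‖f' s‖ ≤ ‖exp ((1 - s) • (Y + Z))‖ * ‖exp (s • Y) * Z - Z * exp (s • Y)‖ *
          ‖exp (s • Z)‖ := norm_mul₃_le
      _ ≤ Real.exp ((1 - s) * (‖Y‖ + ‖Z‖)) * (Real.exp (s * ‖Y‖) * (s * ‖Y * Z - Z * Y‖)) *
          Real.exp (s * ‖Z‖) := by
        gcongr
        · exact (norm_exp_smul_le _ (by linarith)).trans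
            (Real.exp_le_exp.2 (mul_le_mul_of_nonneg_left (norm_add_le Y Z) (by linarith)))
        · exact norm_exp_smul_le Z hs0
      _ = s * (Real.exp ((1 - s) * (‖Y‖ + ‖Z‖) + s * ‖Y‖ + s * ‖Z‖) * ‖Y * Z - Z * Y‖) := by
        rw [Real.exp_add, Real.exp_add]; ring
      _ = s * (Real.exp (‖Y‖ + ‖Z‖) * ‖Y * Z - Z * Y‖) := by ring_nf
      _ ≤ Real.exp (‖Y‖ + ‖Z‖) * ‖Y * Z - Z * Y‖ := mul_le_of_le_one_left (by positivity) hs1.le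
  rw [norm_sub_rev]
  simpa [f] using norm_image_sub_le_of_norm_deriv_le_segment_01'
    (fun s _ => (hf s).hasDerivWithinAt) hbound

end BanachAlgebra

/-- Campbell–Baker–Hausdorff / Trotter-type error estimate: there is a
dimension-independent constant `C > 0` such that for all self-adjoint
operators `A`, `B` of norm at most `1` on a nonzero finite-dimensional complex
inner product space,
`‖exp(−i(A+B)) − exp(−iA)·exp(−iB)‖ ≤ C·‖AB − BA‖`. -/
theorem trotter_error_estimate :
    ∃ C : ℝ, 0 < C ∧
      ∀ (H : Type) [NormedAddCommGroup H] [InnerProductSpace ℂ H]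
        [FiniteDimensional ℂ H] [Nontrivial H]
        (A B : H →L[ℂ] H), IsSelfAdjoint A → IsSelfAdjoint B →
        ‖A‖ ≤ 1 → ‖B‖ ≤ 1 →
        ‖NormedSpace.exp ((-Complex.I) • (A + B)) -
            NormedSpace.exp ((-Complex.I) • A) * NormedSpace.exp ((-Complex.I) • B)‖ ≤
          C * ‖A * B - B * A‖ := by
  refine ⟨Real.exp 2, Real.exp_pos 2, fun H _ _ _ _ A B _ _ hA hB => ?_⟩
  have hnorm : ∀ T : H →L[ℂ] H, ‖(-Complex.I) • T‖ = ‖T‖ := fun T => by simp [norm_smul]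
  have hcomm : (-Complex.I) • A * (-Complex.I) • B - (-Complex.I) • B * (-Complex.I) • A =
      -(A * B - B * A) := by
    simp only [smul_mul_smul_comm, neg_mul_neg, Complex.I_mul_I, neg_one_smul, neg_sub_neg, neg_sub]
  calc _ ≤ Real.exp (‖(-Complex.I) • A‖ + ‖(-Complex.I) • B‖) *
        ‖(-Complex.I) • A * (-Complex.I) • B - (-Complex.I) • B * (-Complex.I) • A‖ := by
        rw [smul_add]; exact norm_exp_add_sub_exp_mul_exp_le _ _
    _ = Real.exp (‖A‖ + ‖B‖) * ‖A * B - B * A‖ := by rw [hnorm, hnorm, hcomm, norm_neg]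
    _ ≤ Real.exp 2 * ‖A * B - B * A‖ := by gcongr; linarith
end
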